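/- arXiv:2108.11522 — 2 statements merged into one kernel-verified Lean document; each statement's English description precedes it below -/
import Mathlib

section
/- For 0 < h ≤ 1, 0 ≤ s ≤ 2λ, and P(ξ) = |ξ|² - 2iζ·ξ with ζ ∈ 𝒱, one has sup_{ξ ∈ ℝ^d} ⟨ξ⟩^s / (h + |P(hξ)|)^λ ≤ C h^{-λ-s}, where ⟨ξ⟩ = (1+|ξ|²)^{1/2} and C depends only on s, λ, d. -/
open scoped RealInnerProductSpace

/-- The symbol P(ξ) = |ξ|² - 2iζ·ξ with ζ = μ₁ + iμ₂. -/
noncomputable def Psym {d : ℕ} (μ₁ μ₂ ξ : EuclideanSpace ℝ (Fin d)) : ℂ :=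
  ((‖ξ‖ ^ 2 : ℝ) : ℂ) - 2 * Complex.I * (((⟪μ₁, ξ⟫ : ℝ) : ℂ) + Complex.I * ((⟪μ₂, ξ⟫ : ℝ) : ℂ))

set_option maxHeartbeats 1000000 in
/-- for 0 < h ≤ 1, 0 ≤ s ≤ 2λ and ζ ∈ 𝒱,
sup_ξ ⟨ξ⟩^s / (h + |P(hξ)|)^λ ≤ C h^{-λ-s}, with C = C(s, λ, d). -/
theorem weight_sup_estimate (d : ℕ) (s lam : ℝ) (hs0 : 0 ≤ s) (hs : s ≤ 2 * lam) :
    ∃ C : ℝ, 0 < C ∧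
      ∀ (μ₁ μ₂ : EuclideanSpace ℝ (Fin d)),
        ⟪μ₁, μ₁⟫ = 1 → ⟪μ₂, μ₂⟫ = 1 → ⟪μ₁, μ₂⟫ = 0 →
        ∀ (h : ℝ), 0 < h → h ≤ 1 →
        ∀ ξ : EuclideanSpace ℝ (Fin d),
          (1 + ‖ξ‖ ^ 2) ^ (s / 2) / (h + ‖Psym μ₁ μ₂ (h • ξ)‖) ^ lam ≤
            C * h ^ (-lam - s) := by
  have hlam : 0 ≤ lam := by linarith
  refine ⟨(65:ℝ) ^ (s/2) + (2:ℝ) ^ (s/2 + lam), by positivity, ?_⟩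
  intro μ₁ μ₂ hμ1 hμ2 hμ12 h hh0 hh1 ξ
  set r := ‖ξ‖ with hrdef
  have hr0 : 0 ≤ r := norm_nonneg ξ
  set v := h • ξ with hvdef
  have hv : ‖v‖ = h * r := by
    rw [hvdef, norm_smul, Real.norm_eq_abs, abs_of_pos hh0]
  have habsnn : 0 ≤ ‖Psym μ₁ μ₂ v‖ := norm_nonneg _
  have hhpow : 0 < h ^ (-lam - s) := Real.rpow_pos_of_pos hh0 _
  have hDpos : 0 < h + ‖Psym μ₁ μ₂ v‖ := by linarith
  by_cases hcase : h * r ≤ 8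
  · -- small frequency: h‖ξ‖ ≤ 8
    have hnum : (1 + r ^ 2 : ℝ) ≤ 65 / h ^ 2 := by
      rw [le_div_iff₀ (by positivity)]
      have k1 : (h * r) ^ 2 ≤ 64 := by nlinarith [mul_nonneg hh0.le hr0]
      have k2 : h ^ 2 ≤ 1 := by nlinarith
      nlinarith [k1, k2]
    have hnum' : (1 + r ^ 2) ^ (s/2) ≤ (65 / h ^ 2) ^ (s/2) :=
      Real.rpow_le_rpow (by positivity) hnum (by positivity)
    have hnum'' : ((65:ℝ) / h ^ 2) ^ (s/2) = 65 ^ (s/2) / h ^ s := by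
      rw [Real.div_rpow (by norm_num) (by positivity), ← Real.rpow_natCast h 2,
        ← Real.rpow_mul hh0.le]
      norm_num
      congr 1
      ring
    have hden : h ^ lam ≤ (h + ‖Psym μ₁ μ₂ v‖) ^ lam :=
      Real.rpow_le_rpow hh0.le (by linarith) hlam
    have hdenpos : (0:ℝ) < h ^ lam := Real.rpow_pos_of_pos hh0 _
    calc (1 + r ^ 2) ^ (s/2) / (h + ‖Psym μ₁ μ₂ v‖) ^ lam
        ≤ (65 ^ (s/2) / h ^ s) / h ^ lam := by
          apply div_le_div₀ (by positivity) _ hdenpos hden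
          rw [← hnum'']; exact hnum'
      _ = 65 ^ (s/2) * h ^ (-lam - s) := by
          rw [div_div, ← Real.rpow_add hh0,
            show -lam - s = -(s + lam) by ring, Real.rpow_neg hh0.le, div_eq_mul_inv]
      _ ≤ (65 ^ (s/2) + 2 ^ (s/2 + lam)) * h ^ (-lam - s) := by
          have h2p : (0:ℝ) < (2:ℝ) ^ (s/2 + lam) := by positivity
          nlinarith
  · -- large frequency: h‖ξ‖ ≥ 8
    push_neg at hcase
    have hv8 : 8 ≤ ‖v‖ := by rw [hv]; linarith
    have habs : ‖v‖ ^ 2 - 2 * ‖v‖ ≤ ‖Psym μ₁ μ₂ v‖ := by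
      have hμ2norm : ‖μ₂‖ = 1 := by
        have h1 := real_inner_self_eq_norm_sq μ₂
        nlinarith [norm_nonneg μ₂]
      have hb : |⟪μ₂, v⟫| ≤ ‖v‖ := by
        calc |⟪μ₂, v⟫| ≤ ‖μ₂‖ * ‖v‖ := abs_real_inner_le_norm _ _
        _ = ‖v‖ := by rw [hμ2norm, one_mul]
      have hre : (Psym μ₁ μ₂ v).re = ‖v‖ ^ 2 + 2 * ⟪μ₂, v⟫ := by
        simp only [Psym, Complex.sub_re, Complex.mul_re, Complex.mul_im, Complex.add_re,
          Complex.add_im, Complex.I_re, Complex.I_im, Complex.ofReal_re, Complex.ofReal_im,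
          Complex.re_ofNat, Complex.im_ofNat]
        ring
      have h1 := Complex.abs_re_le_norm (Psym μ₁ μ₂ v)
      have h2 := le_abs_self ((Psym μ₁ μ₂ v).re)
      have h3 := abs_le.mp hb
      rw [hre] at h1 h2
      linarith [h3.1]
    have hr1 : 1 ≤ r := by nlinarith
    have hrpos : 0 < r := by linarith
    have hD : (h * r) ^ 2 / 2 ≤ h + ‖Psym μ₁ μ₂ v‖ := by
      rw [← hv]; nlinarith [hv8, habs]
    have hDl : ((h * r) ^ 2 / 2) ^ lam ≤ (h + ‖Psym μ₁ μ₂ v‖) ^ lam :=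
      Real.rpow_le_rpow (by positivity) hD hlam
    have hDlpos : (0:ℝ) < ((h * r) ^ 2 / 2) ^ lam := by
      apply Real.rpow_pos_of_pos; positivity
    have hnum : (1 + r ^ 2) ^ (s/2) ≤ (2 * r ^ 2) ^ (s/2) :=
      Real.rpow_le_rpow (by positivity) (by nlinarith) (by positivity)
    have step1 : (1 + r ^ 2) ^ (s/2) / (h + ‖Psym μ₁ μ₂ v‖) ^ lam
        ≤ (2 * r ^ 2) ^ (s/2) / ((h * r) ^ 2 / 2) ^ lam :=
      div_le_div₀ (by positivity) hnum hDlpos hDl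
    have hhr1 : (1:ℝ) ≤ h * r := by linarith
    have key : (h * r) ^ s ≤ (h * r) ^ (2 * lam) :=
      Real.rpow_le_rpow_of_exponent_le hhr1 hs
    have e1 : ((2:ℝ) * r ^ 2) ^ (s/2) = 2 ^ (s/2) * r ^ s := by
      rw [Real.mul_rpow (by norm_num) (by positivity), ← Real.rpow_natCast r 2,
        ← Real.rpow_mul hr0]
      norm_num
      left
      congr 1
      ring
    have e2 : (((h * r) ^ 2 / 2 : ℝ)) ^ lam = h ^ (2*lam) * r ^ (2*lam) / 2 ^ lam := by
      rw [Real.div_rpow (by positivity) (by norm_num), ← Real.rpow_natCast (h*r) 2,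
        ← Real.rpow_mul (by positivity), Real.mul_rpow hh0.le hr0]
      norm_num
    have c1 : h ^ s * r ^ s ≤ h ^ (2*lam) * r ^ (2*lam) := by
      have := key
      rw [Real.mul_rpow hh0.le hr0, Real.mul_rpow hh0.le hr0] at this
      exact this
    have c2 : r ^ s ≤ h ^ (-s) * (h ^ (2*lam) * r ^ (2*lam)) := by
      have hpos : (0:ℝ) < h ^ (-s) := Real.rpow_pos_of_pos hh0 _
      calc r ^ s = h ^ (-s) * (h ^ s * r ^ s) := by
            rw [← mul_assoc, ← Real.rpow_add hh0]; simp
        _ ≤ _ := mul_le_mul_of_nonneg_left c1 hpos.le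
    have c3 : r ^ s / (h ^ (2*lam) * r ^ (2*lam)) ≤ h ^ (-s) := by
      rw [div_le_iff₀ (by positivity)]
      linarith
    have c4 : h ^ (-s) ≤ h ^ (-lam - s) :=
      Real.rpow_le_rpow_of_exponent_ge hh0 hh1 (by linarith)
    calc (1 + r ^ 2) ^ (s/2) / (h + ‖Psym μ₁ μ₂ v‖) ^ lam
        ≤ (2 * r ^ 2) ^ (s/2) / ((h * r) ^ 2 / 2) ^ lam := step1
      _ = 2 ^ (s/2) * 2 ^ lam * (r ^ s / (h ^ (2*lam) * r ^ (2*lam))) := by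
          rw [e1, e2, div_div_eq_mul_div, mul_comm (2 ^ (s/2) * r ^ s) (2 ^ lam),
            ← mul_assoc, mul_comm (2 ^ lam) (2 ^ (s/2)), mul_assoc, mul_div_assoc,
            mul_div_assoc, mul_assoc]
      _ ≤ 2 ^ (s/2) * 2 ^ lam * h ^ (-lam - s) := by
          apply mul_le_mul_of_nonneg_left (c3.trans c4) (by positivity)
      _ = 2 ^ (s/2 + lam) * h ^ (-lam - s) := by
          rw [Real.rpow_add (by norm_num : (0:ℝ) < 2)]
      _ ≤ (65 ^ (s/2) + 2 ^ (s/2 + lam)) * h ^ (-lam - s) := by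
          have h65 : (0:ℝ) < (65:ℝ) ^ (s/2) := by positivity
          nlinarith
end

section
/- With X^λ as above and 0 ≤ s ≤ 2λ, 0 < h ≤ 1: (i) ‖u‖_{W^{s,2}(ℝ^d)} ≤ C h^{-s-λ} ‖u‖_{X^λ}, and (ii) ‖u‖_{X^{-λ}} ≤ C h^{-s-λ} ‖u‖_{W^{-s,2}(ℝ^d)}. -/
open MeasureTheory
open scoped RealInnerProductSpace ENNReal

/-- Square of the Bourgain-type norm ‖u‖²_{X^λ}, in terms of û. -/
noncomputable def XnormSq {d : ℕ} (h lam : ℝ) (μ₁ μ₂ : EuclideanSpace ℝ (Fin d))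
    (uhat : EuclideanSpace ℝ (Fin d) → ℂ) : ℝ≥0∞ :=
  ∫⁻ ξ, (‖uhat ξ‖₊ : ℝ≥0∞) ^ 2 *
    ENNReal.ofReal ((h + ‖Psym μ₁ μ₂ (h • ξ)‖) ^ (2 * lam))

/-- Square of the Sobolev norm ‖u‖²_{W^{s,2}} = ∫ ⟨ξ⟩^{2s} |û(ξ)|² dξ, in terms of û. -/
noncomputable def WnormSq {d : ℕ} (s : ℝ) (uhat : EuclideanSpace ℝ (Fin d) → ℂ) : ℝ≥0∞ :=
  ∫⁻ ξ, (‖uhat ξ‖₊ : ℝ≥0∞) ^ 2 * ENNReal.ofReal ((1 + ‖ξ‖ ^ 2) ^ s)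

/-- Abstract pointwise bound: `1+r² ≤ 17 h⁻³ A`. -/
lemma key_aux0 (h r A : ℝ) (h0 : 0 < h) (h1 : h ≤ 1) (hr : 0 ≤ r) (hA1 : h ≤ A)
    (hA2 : h ^ 2 * r ^ 2 - 2 * (h * r) ≤ A) : (1 + r ^ 2) * h ^ 3 ≤ 17 * A := by
  rcases le_total (h * r) 4 with hc | hc
  · nlinarith [pow_pos h0 3, sq_nonneg (h * r), mul_pos h0 h0]
  · nlinarith [sq_nonneg r, mul_nonneg hr hr, sq_nonneg (h * r - 4), mul_pos h0 h0]

/-- Key rpow pointwise bound. -/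
lemma key_aux (s lam h r A : ℝ) (hs0 : 0 ≤ s) (hs : s ≤ 2 * lam) (h0 : 0 < h) (h1 : h ≤ 1)
    (hr : 0 ≤ r) (hA1 : h ≤ A) (hA2 : h ^ 2 * r ^ 2 - 2 * (h * r) ≤ A) :
    (1 + r ^ 2) ^ s ≤ 17 ^ s * h ^ (2 * (-s - lam)) * A ^ (2 * lam) := by
  have A0 : 0 < A := lt_of_lt_of_le h0 hA1
  have step1 : 1 + r ^ 2 ≤ 17 * h ^ ((-3 : ℝ)) * A := by
    have e : h ^ ((-3 : ℝ)) = (h ^ 3)⁻¹ := by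
      rw [show ((-3 : ℝ)) = -((3 : ℕ) : ℝ) by norm_num, Real.rpow_neg h0.le, Real.rpow_natCast]
    have h3 : (0 : ℝ) < h ^ 3 := pow_pos h0 3
    have hk0 := key_aux0 h r A h0 h1 hr hA1 hA2
    rw [e, mul_comm (17 : ℝ) (h ^ 3)⁻¹, mul_assoc, inv_mul_eq_div, le_div_iff₀ h3]
    linarith
  have hbase : (0 : ℝ) ≤ 1 + r ^ 2 := by positivity
  have hchain : (1 + r ^ 2) ^ s ≤ (17 * h ^ ((-3 : ℝ)) * A) ^ s :=
    Real.rpow_le_rpow hbase step1 hs0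
  have hApos : (0 : ℝ) ≤ 17 * h ^ ((-3 : ℝ)) := by positivity
  have e2 : (17 * h ^ ((-3 : ℝ)) * A) ^ s = 17 ^ s * h ^ ((-3) * s) * A ^ s := by
    rw [Real.mul_rpow hApos A0.le, Real.mul_rpow (by norm_num) (by positivity),
      ← Real.rpow_mul h0.le]
  have e3 : A ^ s = A ^ (s - 2 * lam) * A ^ (2 * lam) := by
    rw [← Real.rpow_add A0]; ring_nf
  have e4 : A ^ (s - 2 * lam) ≤ h ^ (s - 2 * lam) :=
    Real.rpow_le_rpow_of_nonpos h0 hA1 (by linarith)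
  calc (1 + r ^ 2) ^ s ≤ 17 ^ s * h ^ ((-3) * s) * A ^ s := by rw [← e2]; exact hchain
    _ = 17 ^ s * h ^ ((-3) * s) * (A ^ (s - 2 * lam) * A ^ (2 * lam)) := by rw [← e3]
    _ ≤ 17 ^ s * h ^ ((-3) * s) * (h ^ (s - 2 * lam) * A ^ (2 * lam)) := by
        have hAp : (0 : ℝ) ≤ A ^ (2 * lam) := (Real.rpow_pos_of_pos A0 _).le
        have : A ^ (s - 2 * lam) * A ^ (2 * lam) ≤ h ^ (s - 2 * lam) * A ^ (2 * lam) :=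
          mul_le_mul_of_nonneg_right e4 hAp
        have h17 : (0 : ℝ) ≤ 17 ^ s * h ^ ((-3) * s) := by positivity
        exact mul_le_mul_of_nonneg_left this h17
    _ = 17 ^ s * (h ^ ((-3) * s) * h ^ (s - 2 * lam)) * A ^ (2 * lam) := by ring
    _ = 17 ^ s * h ^ (2 * (-s - lam)) * A ^ (2 * lam) := by
        rw [← Real.rpow_add h0, show (-3) * s + (s - 2 * lam) = 2 * (-s - lam) by ring]

/-- Integral monotonicity with a constant. -/
lemma lint_mono {α : Type*} [MeasurableSpace α] (μ : Measure α) (K : ℝ) (hK : 0 ≤ K)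
    (u : α → ℂ) (w1 w2 : α → ℝ) (hle : ∀ x, w1 x ≤ K * w2 x) :
    ∫⁻ x, (‖u x‖₊ : ℝ≥0∞) ^ 2 * ENNReal.ofReal (w1 x) ∂μ ≤
      ENNReal.ofReal K * ∫⁻ x, (‖u x‖₊ : ℝ≥0∞) ^ 2 * ENNReal.ofReal (w2 x) ∂μ := by
  rw [← lintegral_const_mul' _ _ ENNReal.ofReal_ne_top]
  refine lintegral_mono fun x => ?_
  calc (‖u x‖₊ : ℝ≥0∞) ^ 2 * ENNReal.ofReal (w1 x)
      ≤ (‖u x‖₊ : ℝ≥0∞) ^ 2 * (ENNReal.ofReal K * ENNReal.ofReal (w2 x)) := by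
        refine mul_le_mul_right ?_ _
        rw [← ENNReal.ofReal_mul hK]
        exact ENNReal.ofReal_le_ofReal (hle x)
    _ = ENNReal.ofReal K * ((‖u x‖₊ : ℝ≥0∞) ^ 2 * ENNReal.ofReal (w2 x)) := by ring

/-- for 0 ≤ s ≤ 2λ, 0 < h ≤ 1:
(i) ‖u‖_{W^{s,2}} ≤ C h^{-s-λ} ‖u‖_{X^λ} and (ii) ‖u‖_{X^{-λ}} ≤ C h^{-s-λ} ‖u‖_{W^{-s,2}}. -/
theorem Xnorm_Sobolev_estimates (d : ℕ) (s lam : ℝ) (hs0 : 0 ≤ s) (hs : s ≤ 2 * lam) :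
    ∃ C : ℝ, 0 < C ∧
      ∀ (μ₁ μ₂ : EuclideanSpace ℝ (Fin d)),
        ⟪μ₁, μ₁⟫ = 1 → ⟪μ₂, μ₂⟫ = 1 → ⟪μ₁, μ₂⟫ = 0 →
        ∀ (h : ℝ), 0 < h → h ≤ 1 →
        ∀ uhat : EuclideanSpace ℝ (Fin d) → ℂ,
          WnormSq s uhat ≤ ENNReal.ofReal (C * h ^ (2 * (-s - lam))) *
              XnormSq h lam μ₁ μ₂ uhat ∧
          XnormSq h (-lam) μ₁ μ₂ uhat ≤ ENNReal.ofReal (C * h ^ (2 * (-s - lam))) *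
              WnormSq (-s) uhat := by
  refine ⟨17 ^ s, Real.rpow_pos_of_pos (by norm_num) _, fun μ₁ μ₂ hμ1 hμ2 hμ12 h h0 h1 uhat => ?_⟩
  have hμ2norm : ‖μ₂‖ = 1 := by
    have := real_inner_self_eq_norm_sq μ₂
    nlinarith [norm_nonneg μ₂]
  -- pointwise key bound
  have key : ∀ ξ : EuclideanSpace ℝ (Fin d),
      (1 + ‖ξ‖ ^ 2) ^ s ≤ (17 ^ s * h ^ (2 * (-s - lam))) *
        (h + ‖Psym μ₁ μ₂ (h • ξ)‖) ^ (2 * lam) := by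
    intro ξ
    set A := h + ‖Psym μ₁ μ₂ (h • ξ)‖ with hAdef
    have hA1 : h ≤ A := le_add_of_nonneg_right (norm_nonneg _)
    have hre : (Psym μ₁ μ₂ (h • ξ)).re = ‖h • ξ‖ ^ 2 + 2 * ⟪μ₂, h • ξ⟫ := by
      simp [Psym, ← Complex.ofReal_pow]
    have hinner : |⟪μ₂, h • ξ⟫| ≤ ‖h • ξ‖ := by
      calc |⟪μ₂, h • ξ⟫| ≤ ‖μ₂‖ * ‖h • ξ‖ := abs_real_inner_le_norm _ _
        _ = ‖h • ξ‖ := by rw [hμ2norm, one_mul]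
    have hnorm : ‖h • ξ‖ = h * ‖ξ‖ := by
      rw [norm_smul, Real.norm_eq_abs, abs_of_pos h0]
    have hA2 : h ^ 2 * ‖ξ‖ ^ 2 - 2 * (h * ‖ξ‖) ≤ A := by
      have h3 : (Psym μ₁ μ₂ (h • ξ)).re ≤ ‖Psym μ₁ μ₂ (h • ξ)‖ :=
        Complex.re_le_norm _
      have h4 : -(h * ‖ξ‖) ≤ ⟪μ₂, h • ξ⟫ := by
        have h6 := neg_abs_le ⟪μ₂, h • ξ⟫
        rw [hnorm] at hinner
        linarith
      have h5 : ‖h • ξ‖ ^ 2 = h ^ 2 * ‖ξ‖ ^ 2 := by rw [hnorm]; ring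
      have := hre ▸ h3
      nlinarith [norm_nonneg (Psym μ₁ μ₂ (h • ξ))]
    have := key_aux s lam h ‖ξ‖ A hs0 hs h0 h1 (norm_nonneg ξ) hA1 hA2
    linarith [this]
  constructor
  · -- part (i)
    unfold WnormSq XnormSq
    exact lint_mono volume _ (by positivity) uhat _ _ key
  · -- part (ii)
    unfold WnormSq XnormSq
    refine lint_mono volume _ (by positivity) uhat _ _ fun ξ => ?_
    set A := h + ‖Psym μ₁ μ₂ (h • ξ)‖ with hAdef
    have hA0 : 0 < A := lt_of_lt_of_le h0 (le_add_of_nonneg_right (norm_nonneg _))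
    have hr0 : (0 : ℝ) < 1 + ‖ξ‖ ^ 2 := by positivity
    have hk := key ξ
    rw [← hAdef] at hk
    have hK0 : (0 : ℝ) < 17 ^ s * h ^ (2 * (-s - lam)) := by positivity
    have e1 : A ^ (2 * (-lam)) = (A ^ (2 * lam))⁻¹ := by
      rw [show (2 : ℝ) * (-lam) = -(2 * lam) by ring, Real.rpow_neg hA0.le]
    have e2 : (1 + ‖ξ‖ ^ 2) ^ (-s) = ((1 + ‖ξ‖ ^ 2) ^ s)⁻¹ := by
      rw [← Real.rpow_neg hr0.le]
    rw [e1, e2]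
    have hp1 : (0 : ℝ) < (1 + ‖ξ‖ ^ 2) ^ s := Real.rpow_pos_of_pos hr0 _
    have hp2 : (0 : ℝ) < A ^ (2 * lam) := Real.rpow_pos_of_pos hA0 _
    have h1' : (1 + ‖ξ‖ ^ 2) ^ s * (A ^ (2 * lam))⁻¹ ≤ 17 ^ s * h ^ (2 * (-s - lam)) := by
      rw [← div_eq_mul_inv, div_le_iff₀ hp2]
      exact hk
    calc (A ^ (2 * lam))⁻¹ = ((1 + ‖ξ‖ ^ 2) ^ s * (A ^ (2 * lam))⁻¹) * ((1 + ‖ξ‖ ^ 2) ^ s)⁻¹ := by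
          field_simp
      _ ≤ (17 ^ s * h ^ (2 * (-s - lam))) * ((1 + ‖ξ‖ ^ 2) ^ s)⁻¹ :=
          mul_le_mul_of_nonneg_right h1' (by positivity)
end
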